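/- Let λ and μ be positive roots with λ ⪯ μ. If μ is a minimal root, then λ is a minimal root. -/

import Mathlib

open Real

variable {B : Type*}

/-- The pairing constant `⟨α_s, α_t⟩` of the standard bilinear form:
`-cos (π / M s t)` if `M s t ≠ 0`, and `-1` if `M s t = 0` (i.e. `m_{s,t} = ∞`). -/
noncomputable def pairing (M : CoxeterMatrix B) (s t : B) : ℝ :=
  if M s t = 0 then -1 else -Real.cos (Real.pi / (M s t : ℝ))

/-- The standard symmetric bilinear form on `V = B → ℝ`. -/
noncomputable def form [Fintype B] (M : CoxeterMatrix B) (v w : B → ℝ) : ℝ :=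
  ∑ s, ∑ t, v s * w t * pairing M s t

/-- The simple root `α_s`, i.e. the standard basis vector at `s`. -/
noncomputable def sroot [DecidableEq B] (s : B) : B → ℝ := Pi.single s 1

/-- `λ` is a root: `λ = ρ(w) α_s` for some `w ∈ W`, `s ∈ B`. -/
def IsRoot [DecidableEq B] (M : CoxeterMatrix B)
    (ρ : M.Group →* Module.End ℝ (B → ℝ)) (lam : B → ℝ) : Prop :=
  ∃ (w : M.Group) (s : B), ρ w (sroot s) = lam

/-- `λ` is positive: all coordinates are nonnegative. -/
def IsPos (lam : B → ℝ) : Prop := ∀ s, 0 ≤ lam s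

/-- `λ` is negative: all coordinates are nonpositive. -/
def IsNeg (lam : B → ℝ) : Prop := ∀ s, lam s ≤ 0

/-- `λ` is a positive root. -/
def IsPosRoot [DecidableEq B] (M : CoxeterMatrix B)
    (ρ : M.Group →* Module.End ℝ (B → ℝ)) (lam : B → ℝ) : Prop :=
  IsRoot M ρ lam ∧ IsPos lam

/-- `λ` dominates `μ`: for every `w ∈ W`, if `ρ(w) μ` is positive then so is `ρ(w) λ`. -/
def Dominates (M : CoxeterMatrix B)
    (ρ : M.Group →* Module.End ℝ (B → ℝ)) (lam mu : B → ℝ) : Prop :=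
  ∀ w : M.Group, IsPos (ρ w mu) → IsPos (ρ w lam)

/-- `λ` is a minimal root: a positive root dominating no positive root other than itself. -/
def IsMinimal [DecidableEq B] (M : CoxeterMatrix B)
    (ρ : M.Group →* Module.End ℝ (B → ℝ)) (lam : B → ℝ) : Prop :=
  IsPosRoot M ρ lam ∧
    ∀ mu, IsPosRoot M ρ mu → Dominates M ρ lam mu → mu = lam

/-- The depth `δ(λ)` of a positive root:
the least Coxeter length of a `w ∈ W` with `ρ(w⁻¹) λ` negative. -/
noncomputable def depth (M : CoxeterMatrix B)
    (ρ : M.Group →* Module.End ℝ (B → ℝ)) (lam : B → ℝ) : ℕ :=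
  sInf {n | ∃ w : M.Group, IsNeg (ρ w⁻¹ lam) ∧ M.toCoxeterSystem.length w = n}

/-- The partial order `λ ⪯ μ` on positive roots:
`μ = ρ(w) λ` for some `w` with `δ(μ) = ℓ(w) + δ(λ)`. -/
def PLE (M : CoxeterMatrix B)
    (ρ : M.Group →* Module.End ℝ (B → ℝ)) (lam mu : B → ℝ) : Prop :=
  ∃ w : M.Group, mu = ρ w lam ∧
    depth M ρ mu = M.toCoxeterSystem.length w + depth M ρ lam

/-- The Coxeter graph of `M`: distinct `s`, `t` are adjacent iff `M s t ≥ 3` or `M s t = 0`. -/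
def coxGraph (M : CoxeterMatrix B) : SimpleGraph B where
  Adj s t := s ≠ t ∧ (M s t = 0 ∨ 3 ≤ M s t)
  symm := by
    constructor
    intro s t h
    exact ⟨h.1.symm, by rw [M.symmetric t s]; exact h.2⟩
  loopless := by constructor; intro s h; exact h.1 rfl

/-- The support of a vector `λ ∈ V`. -/
def supp (lam : B → ℝ) : Set B := {s | lam s ≠ 0}

/-!
Write `μ = ρ(u) λ` with `δ(μ) = ℓ(u) + δ(λ)`. A simple reflection changes the depth by at most
one, so along a reduced word for `u` every letter raises the depth by exactly one. If a simple
reflection `s_i` raises the depth of a root `β`, it keeps every positive root `ν` dominated by `β`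
positive: otherwise `ν = α_i`, and a shortest `v` making `ρ(v⁻¹) β` negative must make
`ρ(v⁻¹) α_i` negative too, so `s_i` is a left descent of `v` and `s_i v` already makes `s_i β`
negative, contradicting the jump in depth. Hence if `λ` dominates `ν`, then `ρ(u) ν` is a positive
root dominated by `μ`, so `ρ(u) ν = μ = ρ(u) λ` by minimality of `μ`, and `ν = λ`.

Underneath lies the fact that every root is positive or negative: if `ℓ(w s_i) > ℓ(w)` then
`ρ(w) α_i ≥ 0`. Peeling off a longest alternating suffix in `s_i, s_t` reduces this to the
dihedral case, where the coefficients are values of Chebyshev polynomials at `2 cos (π / m)`,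
i.e. ratios `sin (k π / m) / sin (π / m) ≥ 0` for `k ≤ m`.
-/

section Form

variable (M : CoxeterMatrix B)

theorem pairing_symm (s t : B) : pairing M s t = pairing M t s := by
  simp [pairing, M.symmetric s t]

theorem pairing_self (s : B) : pairing M s s = 1 := by
  simp [pairing]

variable [Fintype B]

theorem form_symm (v w : B → ℝ) : form M v w = form M w v := by
  rw [form, Finset.sum_comm]
  exact Finset.sum_congr rfl fun s _ => Finset.sum_congr rfl fun t _ => by
    rw [pairing_symm M t s]; ring

variable [DecidableEq B]

theorem form_eq_toBilin' (v w : B → ℝ) :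
    form M v w = Matrix.toBilin' (Matrix.of (pairing M)) v w := by
  rw [form, Matrix.toBilin'_apply]
  exact Finset.sum_congr rfl fun s _ => Finset.sum_congr rfl fun t _ => by simp; ring

theorem form_add_left (u u' v : B → ℝ) : form M (u + u') v = form M u v + form M u' v := by
  simp [form_eq_toBilin']

theorem form_sub_left (u u' v : B → ℝ) : form M (u - u') v = form M u v - form M u' v := by
  simp [form_eq_toBilin']

theorem form_smul_left (c : ℝ) (u v : B → ℝ) : form M (c • u) v = c * form M u v := by
  simp [form_eq_toBilin']

theorem form_sub_right (u v v' : B → ℝ) : form M u (v - v') = form M u v - form M u v' := by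
  simp [form_eq_toBilin']

theorem form_smul_right (c : ℝ) (u v : B → ℝ) : form M u (c • v) = c * form M u v := by
  simp [form_eq_toBilin']

theorem form_sroot_sroot (s t : B) : form M (sroot s) (sroot t) = pairing M s t := by
  simp [form_eq_toBilin', sroot]

end Form

section Chebyshev

open Polynomial Polynomial.Chebyshev

theorem Polynomial.Chebyshev.S_eval_two_mul_cos_pi_div_nonneg {m : ℕ} (hm : 2 ≤ m) {n : ℤ}
    (h0 : -1 ≤ n) (h1 : n + 1 ≤ m) : 0 ≤ (S ℝ n).eval (2 * cos (π / m)) := by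
  have hm' : (1 : ℝ) < m := by exact_mod_cast hm
  have hsin : 0 < sin (π / m) :=
    sin_pos_of_pos_of_lt_pi (by positivity) (div_lt_self pi_pos hm')
  have h0' : (0 : ℝ) ≤ n + 1 := by exact_mod_cast (by omega : (0 : ℤ) ≤ n + 1)
  have h1' : (n : ℝ) + 1 ≤ m := by exact_mod_cast h1
  have hprod : 0 ≤ (S ℝ n).eval (2 * cos (π / m)) * sin (π / m) := by
    rw [S_two_mul_real_cos]
    apply sin_nonneg_of_nonneg_of_le_pi (by positivity)
    calc ((n : ℝ) + 1) * (π / m) ≤ m * (π / m) := by gcongr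
      _ = π := by field_simp
  exact nonneg_of_mul_nonneg_left hprod hsin

theorem S_eval_neg_two_mul_pairing_nonneg {M : CoxeterMatrix B} {s t : B} (hst : s ≠ t) {n : ℤ}
    (h0 : -1 ≤ n) (hn : M s t = 0 ∨ n + 1 ≤ M s t) :
    0 ≤ (S ℝ n).eval (-2 * pairing M s t) := by
  by_cases hm : M s t = 0
  · have : (0 : ℝ) ≤ n + 1 := by exact_mod_cast (by omega : (0 : ℤ) ≤ n + 1)
    simpa [pairing, hm] using this
  · have h2 : 2 ≤ M s t := by have := M.off_diagonal s t hst; omega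
    simpa [pairing, hm] using S_eval_two_mul_cos_pi_div_nonneg h2 h0 (hn.resolve_left hm)

end Chebyshev

namespace CoxeterSystem

variable {W : Type*} [Group W] {M : CoxeterMatrix B} (cs : CoxeterSystem M W)

theorem eq_zero_or_le_of_isReduced_alternatingWord {i i' : B} {m : ℕ}
    (h : cs.IsReduced (alternatingWord i i' m)) : M i i' = 0 ∨ m ≤ M i i' := by
  by_contra! hm
  exact cs.not_isReduced_alternatingWord i i' hm.1 hm.2 h

theorem exists_eq_mul_wordProd_alternatingWord (s t : B) {w : W}
    (ht : cs.IsRightDescent w t) :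
    ∃ v k, 1 ≤ k ∧ w = v * cs.wordProd (alternatingWord s t k) ∧
      cs.length w = cs.length v + k ∧ ¬ cs.IsRightDescent v s ∧ ¬ cs.IsRightDescent v t := by
  classical
  have hex : ∃ n, ∃ v k, cs.length v = n ∧ 1 ≤ k ∧
      w = v * cs.wordProd (alternatingWord s t k) ∧ cs.length w = cs.length v + k := by
    refine ⟨_, w * cs.simple t, 1, rfl, le_rfl, ?_, (cs.isRightDescent_iff.mp ht).symm⟩
    simp [alternatingWord]
  obtain ⟨v, k, hv, hk, hw, hlen⟩ := Nat.find_spec hex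
  refine ⟨v, k, hk, hw, hlen, ?_⟩
  suffices h : ∀ r, r = s ∨ r = t → ¬ cs.IsRightDescent v r from
    ⟨h s (.inl rfl), h t (.inr rfl)⟩
  intro r hr hd
  have hvr := cs.isRightDescent_iff.mp hd
  have hcancel : ∀ u, v * u = v * cs.simple r * (cs.simple r * u) := fun u => by
    simp [mul_assoc]
  by_cases hy : r = if Even k then t else s
  · -- a descent at the next letter of the alternating word contradicts the minimality of `ℓ v`
    have hw' : w = v * cs.simple r * cs.wordProd (alternatingWord s t (k + 1)) := by
      rw [alternatingWord_succ', ← hy, wordProd_cons, ← hcancel, hw]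
    have := Nat.find_min' hex ⟨v * cs.simple r, k + 1, rfl, by omega, hw', by omega⟩
    omega
  · -- a descent at the first letter of the word would shorten `w`
    obtain ⟨j, rfl⟩ : ∃ j, k = j + 1 := ⟨k - 1, by omega⟩
    have hr : r = if Even j then t else s := by
      rcases Nat.even_or_odd j with hj | hj
      · simp [Nat.even_add_one, hj] at hy ⊢; tauto
      · simp [Nat.even_add_one, Nat.not_even_iff_odd.mpr hj] at hy ⊢; tauto
    have hw' : w = v * cs.simple r * cs.wordProd (alternatingWord s t j) := by
      rw [hw, alternatingWord_succ', ← hr, wordProd_cons, hcancel,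
        cs.simple_mul_simple_cancel_left]
    have h1 := cs.length_mul_le (v * cs.simple r) (cs.wordProd (alternatingWord s t j))
    have h2 := cs.length_wordProd_le (alternatingWord s t j)
    rw [← hw', length_alternatingWord] at *
    omega

end CoxeterSystem

section Roots

open CoxeterSystem

variable {M : CoxeterMatrix B} {ρ : M.Group →* Module.End ℝ (B → ℝ)} {lam nu : B → ℝ}

local prefix:100 "ℓ" => M.toCoxeterSystem.length

theorem rho_mul_apply (w g : M.Group) (v : B → ℝ) : ρ (w * g) v = ρ w (ρ g v) := by
  rw [map_mul, Module.End.mul_apply]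

theorem rho_inv_apply_rho (w : M.Group) (v : B → ℝ) : ρ w⁻¹ (ρ w v) = v := by
  rw [← rho_mul_apply, inv_mul_cancel, map_one, Module.End.one_apply]

theorem eq_zero_of_isPos_of_isNeg (h₁ : IsPos lam) (h₂ : IsNeg lam) : lam = 0 :=
  funext fun s => le_antisymm (h₂ s) (h₁ s)

theorem Dominates.rho (h : Dominates M ρ lam nu) (g : M.Group) :
    Dominates M ρ (ρ g lam) (ρ g nu) := fun w hw => by
  rw [← rho_mul_apply] at hw ⊢
  exact h (w * g) hw

theorem depth_le_length {w : M.Group} (h : IsNeg (ρ w⁻¹ lam)) : depth M ρ lam ≤ ℓ w :=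
  Nat.sInf_le ⟨w, h, rfl⟩

variable [DecidableEq B]

theorem isPos_sroot (s : B) : IsPos (sroot (B := B) s) := fun t => by
  by_cases h : t = s <;> simp [sroot, h]

theorem IsRoot.rho (h : IsRoot M ρ lam) (w : M.Group) : IsRoot M ρ (ρ w lam) := by
  obtain ⟨v, s, rfl⟩ := h
  exact ⟨w * v, s, rho_mul_apply w v _⟩

theorem IsRoot.ne_zero (h : IsRoot M ρ lam) : lam ≠ 0 := by
  rintro rfl
  obtain ⟨w, s, hw⟩ := h
  have := rho_inv_apply_rho (ρ := ρ) w (sroot s)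
  rw [hw, map_zero] at this
  simpa [sroot] using congrFun this s

variable [Fintype B]

def IsGeometricRep (M : CoxeterMatrix B) (ρ : M.Group →* Module.End ℝ (B → ℝ)) : Prop :=
  ∀ (s : B) (v : B → ℝ),
    ρ (M.toCoxeterSystem.simple s) v = v - (2 * form M v (sroot s)) • sroot s

namespace IsGeometricRep

open Polynomial Polynomial.Chebyshev

theorem rho_simple_sroot_self (hρ : IsGeometricRep M ρ) (i : B) :
    ρ (M.toCoxeterSystem.simple i) (sroot i) = -sroot i := by
  rw [hρ, form_sroot_sroot, pairing_self]
  module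

theorem rho_simple_smul_add (hρ : IsGeometricRep M ρ) (i j : B) (a b : ℝ) :
    ρ (M.toCoxeterSystem.simple i) (a • sroot j + b • sroot i) =
      a • sroot j + (-2 * pairing M j i * a - b) • sroot i := by
  rw [hρ, form_add_left, form_smul_left, form_smul_left, form_sroot_sroot, form_sroot_sroot,
    pairing_self]
  module

theorem form_rho_simple (hρ : IsGeometricRep M ρ) (i : B) (u v : B → ℝ) :
    form M (ρ (M.toCoxeterSystem.simple i) u) (ρ (M.toCoxeterSystem.simple i) v) =
      form M u v := by
  rw [hρ, hρ, form_sub_left, form_sub_right, form_sub_right, form_smul_left, form_smul_right,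
    form_smul_left, form_smul_right, form_sroot_sroot, pairing_self, form_symm M (sroot i) v]
  ring

theorem form_rho (hρ : IsGeometricRep M ρ) (w : M.Group) (u v : B → ℝ) :
    form M (ρ w u) (ρ w v) = form M u v := by
  induction w using M.toCoxeterSystem.simple_induction_left generalizing u v with
  | one => simp
  | mul_simple_left w i ih => rw [rho_mul_apply, rho_mul_apply, hρ.form_rho_simple, ih]

theorem form_self_of_isRoot (hρ : IsGeometricRep M ρ) (h : IsRoot M ρ lam) :
    form M lam lam = 1 := by
  obtain ⟨w, s, rfl⟩ := h
  rw [hρ.form_rho, form_sroot_sroot, pairing_self]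

/- Applying `s_t` and `s_s` alternately to `α_s` produces the three-term recursion
`S (k + 1) = x S k - S (k - 1)` of the rescaled Chebyshev polynomials, with `x = -2 ⟨α_s, α_t⟩`. -/
theorem rho_alternatingWord_sroot (hρ : IsGeometricRep M ρ) (s t : B) (k : ℕ) :
    ρ (M.toCoxeterSystem.wordProd (alternatingWord s t k)) (sroot s) =
      (S ℝ k).eval (-2 * pairing M s t) • sroot (if Even k then s else t) +
        (S ℝ (k - 1)).eval (-2 * pairing M s t) • sroot (if Even k then t else s) := by
  induction k with
  | zero => simp [alternatingWord]
  | succ k ih =>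
    rw [alternatingWord_succ', wordProd_cons, rho_mul_apply, ih, hρ.rho_simple_smul_add]
    push_cast
    rw [add_sub_cancel_right, S_add_one]
    rcases Nat.even_or_odd k with hk | hk
    · simp [hk, Nat.even_add_one, add_comm]
    · simp [Nat.not_even_iff_odd.mpr hk, Nat.even_add_one, pairing_symm M t s, add_comm]

theorem exists_rho_alternatingWord_sroot_eq (hρ : IsGeometricRep M ρ) {s t : B} (hst : s ≠ t)
    {k : ℕ} (hk : M s t = 0 ∨ k + 1 ≤ M s t) :
    ∃ a b : ℝ, 0 ≤ a ∧ 0 ≤ b ∧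
      ρ (M.toCoxeterSystem.wordProd (alternatingWord s t k)) (sroot s) =
        a • sroot s + b • sroot t := by
  have ha := S_eval_neg_two_mul_pairing_nonneg (M := M) hst (n := k) (by omega) (by omega)
  have hb := S_eval_neg_two_mul_pairing_nonneg (M := M) hst (n := k - 1) (by omega) (by omega)
  rw [hρ.rho_alternatingWord_sroot]
  by_cases hk : Even k
  · exact ⟨_, _, ha, hb, by rw [if_pos hk, if_pos hk]⟩
  · exact ⟨_, _, hb, ha, by rw [if_neg hk, if_neg hk, add_comm]⟩

theorem isPos_rho_sroot_of_not_isRightDescent (hρ : IsGeometricRep M ρ) {w : M.Group} {i : B}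
    (hw : ¬ M.toCoxeterSystem.IsRightDescent w i) : IsPos (ρ w (sroot i)) := by
  induction hn : ℓ w using Nat.strong_induction_on generalizing w i with
  | _ n ih =>
  rcases eq_or_ne w 1 with rfl | hw1
  · simpa using isPos_sroot i
  obtain ⟨t, ht⟩ := M.toCoxeterSystem.exists_rightDescent_of_ne_one hw1
  have hit : i ≠ t := by rintro rfl; exact hw ht
  obtain ⟨v, k, hk, rfl, hlen, hvi, hvt⟩ :=
    M.toCoxeterSystem.exists_eq_mul_wordProd_alternatingWord i t ht
  -- `w s_i = v · π (alternatingWord t i (k + 1))` has length `ℓ v + k + 1`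
  have hred : M.toCoxeterSystem.IsReduced (alternatingWord t i (k + 1)) := by
    have h1 := M.toCoxeterSystem.not_isRightDescent_iff.mp hw
    rw [mul_assoc, ← wordProd_concat, ← alternatingWord_succ] at h1
    have h2 := M.toCoxeterSystem.length_mul_le v
      (M.toCoxeterSystem.wordProd (alternatingWord t i (k + 1)))
    have h3 := M.toCoxeterSystem.length_wordProd_le (alternatingWord t i (k + 1))
    rw [length_alternatingWord] at h3
    unfold CoxeterSystem.IsReduced
    rw [length_alternatingWord]
    omega
  have hm : M i t = 0 ∨ k + 1 ≤ M i t := by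
    simpa [M.symmetric t i] using M.toCoxeterSystem.eq_zero_or_le_of_isReduced_alternatingWord hred
  obtain ⟨a, b, ha, hb, hab⟩ := hρ.exists_rho_alternatingWord_sroot_eq hit hm
  have hvi' := ih _ (by omega) hvi rfl
  have hvt' := ih _ (by omega) hvt rfl
  rw [rho_mul_apply, hab, map_add, map_smul, map_smul]
  exact fun u => add_nonneg (mul_nonneg ha (hvi' u)) (mul_nonneg hb (hvt' u))

theorem isPos_or_isNeg_of_isRoot (hρ : IsGeometricRep M ρ) (h : IsRoot M ρ lam) :
    IsPos lam ∨ IsNeg lam := by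
  obtain ⟨w, s, rfl⟩ := h
  by_cases hd : M.toCoxeterSystem.IsRightDescent w s
  · have hpos := hρ.isPos_rho_sroot_of_not_isRightDescent
      (M.toCoxeterSystem.isRightDescent_iff_not_isRightDescent_mul.mp hd)
    have heq : ρ w (sroot s) = -ρ (w * M.toCoxeterSystem.simple s) (sroot s) := by
      rw [rho_mul_apply, hρ.rho_simple_sroot_self, map_neg, neg_neg]
    exact .inr fun u => by simpa [heq] using hpos u
  · exact .inl (hρ.isPos_rho_sroot_of_not_isRightDescent hd)

theorem eq_sroot_of_not_isPos_rho_simple (hρ : IsGeometricRep M ρ) (hnu : IsPosRoot M ρ nu)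
    {i : B} (h : ¬ IsPos (ρ (M.toCoxeterSystem.simple i) nu)) : nu = sroot i := by
  have hneg :=
    (hρ.isPos_or_isNeg_of_isRoot (hnu.1.rho (M.toCoxeterSystem.simple i))).resolve_left h
  -- `s_i` changes only the `i`-th coordinate, so all other coordinates of `nu` vanish
  have hnu_eq : nu = nu i • sroot i := by
    funext t
    by_cases hti : t = i
    · simp [hti, sroot]
    · have := hneg t
      rw [hρ] at this
      simp only [Pi.sub_apply, Pi.smul_apply, sroot, Pi.single_apply, hti, if_false, smul_eq_mul,
        mul_zero, sub_zero] at this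
      simp [hti, sroot, le_antisymm this (hnu.2 t)]
  have hnorm := hρ.form_self_of_isRoot hnu.1
  rw [hnu_eq, form_smul_left, form_smul_right, form_sroot_sroot, pairing_self, mul_one] at hnorm
  have : nu i = 1 := by nlinarith [hnu.2 i]
  rwa [this, one_smul] at hnu_eq

theorem exists_length_eq_depth (hρ : IsGeometricRep M ρ) (h : IsRoot M ρ lam) :
    ∃ w : M.Group, IsNeg (ρ w⁻¹ lam) ∧ ℓ w = depth M ρ lam := by
  have hne : {n | ∃ w : M.Group, IsNeg (ρ w⁻¹ lam) ∧ ℓ w = n}.Nonempty := by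
    obtain ⟨w, s, rfl⟩ := h
    refine ⟨_, w * M.toCoxeterSystem.simple s, ?_, rfl⟩
    rw [mul_inv_rev, rho_mul_apply, rho_inv_apply_rho, M.toCoxeterSystem.inv_simple,
      hρ.rho_simple_sroot_self]
    exact fun u => neg_nonpos.mpr (isPos_sroot s u)
  exact Nat.sInf_mem hne

theorem depth_rho_le (hρ : IsGeometricRep M ρ) (h : IsRoot M ρ lam) (u : M.Group) :
    depth M ρ (ρ u lam) ≤ ℓ u + depth M ρ lam := by
  obtain ⟨v, hv, hlen⟩ := hρ.exists_length_eq_depth h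
  have hneg : IsNeg (ρ (u * v)⁻¹ (ρ u lam)) := by
    rwa [mul_inv_rev, rho_mul_apply, rho_inv_apply_rho]
  have := M.toCoxeterSystem.length_mul_le u v
  have := depth_le_length hneg
  omega

theorem isPos_rho_simple_of_dominates (hρ : IsGeometricRep M ρ) {β : B → ℝ}
    (hβ : IsRoot M ρ β) (hnu : IsPosRoot M ρ nu) (hdom : Dominates M ρ β nu) {i : B}
    (hd : depth M ρ (ρ (M.toCoxeterSystem.simple i) β) = depth M ρ β + 1) :
    IsPos (ρ (M.toCoxeterSystem.simple i) nu) := by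
  by_contra hneg
  obtain rfl := hρ.eq_sroot_of_not_isPos_rho_simple hnu hneg
  obtain ⟨v, hv, hlen⟩ := hρ.exists_length_eq_depth hβ
  -- otherwise the negative root `ρ v⁻¹ β` would be positive
  have hnpos : ¬ IsPos (ρ v⁻¹ (sroot i)) := fun hp =>
    (hβ.rho v⁻¹).ne_zero (eq_zero_of_isPos_of_isNeg (hdom v⁻¹ hp) hv)
  have hdesc : M.toCoxeterSystem.IsRightDescent v⁻¹ i := by
    by_contra hnd
    exact hnpos (hρ.isPos_rho_sroot_of_not_isRightDescent hnd)
  have hshort : ℓ (M.toCoxeterSystem.simple i * v) < ℓ v := by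
    simpa [IsLeftDescent] using M.toCoxeterSystem.isRightDescent_inv_iff.mp hdesc
  have : depth M ρ (ρ (M.toCoxeterSystem.simple i) β) ≤ ℓ (M.toCoxeterSystem.simple i * v) :=
    depth_le_length (by rwa [mul_inv_rev, rho_mul_apply, rho_inv_apply_rho])
  omega

theorem isPos_rho_of_dominates (hρ : IsGeometricRep M ρ) (hlam : IsRoot M ρ lam)
    (hnu : IsPosRoot M ρ nu) (hdom : Dominates M ρ lam nu) {u : M.Group}
    (hu : depth M ρ (ρ u lam) = ℓ u + depth M ρ lam) : IsPos (ρ u nu) := by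
  induction hn : ℓ u using Nat.strong_induction_on generalizing u with
  | _ n ih =>
  rcases eq_or_ne u 1 with rfl | hu1
  · simpa using hnu.2
  obtain ⟨i, hi⟩ := M.toCoxeterSystem.exists_leftDescent_of_ne_one hu1
  obtain ⟨u', rfl⟩ : ∃ u', u = M.toCoxeterSystem.simple i * u' :=
    ⟨M.toCoxeterSystem.simple i * u, (M.toCoxeterSystem.simple_mul_simple_cancel_left i).symm⟩
  have hlen := M.toCoxeterSystem.isLeftDescent_iff.mp hi
  rw [M.toCoxeterSystem.simple_mul_simple_cancel_left] at hlen
  -- the depth is subadditive, so it must grow by exactly one at each of the `ℓ u` letters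
  have h1 := hρ.depth_rho_le hlam u'
  have h2 := hρ.depth_rho_le (hlam.rho u') (M.toCoxeterSystem.simple i)
  rw [← rho_mul_apply, M.toCoxeterSystem.length_simple] at h2
  have hu' : depth M ρ (ρ u' lam) = ℓ u' + depth M ρ lam := by omega
  rw [rho_mul_apply]
  exact hρ.isPos_rho_simple_of_dominates (hlam.rho u') ⟨hnu.1.rho u', ih _ (by omega) hu' rfl⟩
    (hdom.rho u') (by rw [← rho_mul_apply]; omega)

end IsGeometricRep

end Roots

theorem statement5_general [DecidableEq B] [Fintype B] (M : CoxeterMatrix B)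
    (ρ : M.Group →* Module.End ℝ (B → ℝ))
    (hρ : ∀ (s : B) (v : B → ℝ),
      ρ (M.simple s) v = v - (2 * form M v (sroot s)) • sroot s)
    (lam mu : B → ℝ) (hlam : IsPosRoot M ρ lam)
    (hle : PLE M ρ lam mu) (hmin : IsMinimal M ρ mu) :
    IsMinimal M ρ lam := by
  obtain ⟨u, rfl, hdepth⟩ := hle
  refine ⟨hlam, fun nu hnu hdom => ?_⟩
  have hpos : IsPosRoot M ρ (ρ u nu) :=
    ⟨hnu.1.rho u, IsGeometricRep.isPos_rho_of_dominates hρ hlam.1 hnu hdom hdepth⟩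
  have h := hmin.2 _ hpos (hdom.rho u)
  simpa only [rho_inv_apply_rho] using congrArg (ρ u⁻¹) h

theorem statement5 [DecidableEq B] [Fintype B] (M : CoxeterMatrix B)
    (ρ : M.Group →* Module.End ℝ (B → ℝ))
    (hρ : ∀ (s : B) (v : B → ℝ),
      ρ (M.simple s) v = v - (2 * form M v (sroot s)) • sroot s)
    (lam mu : B → ℝ) (hlam : IsPosRoot M ρ lam) (hmu : IsPosRoot M ρ mu)
    (hle : PLE M ρ lam mu) (hmin : IsMinimal M ρ mu) :
    IsMinimal M ρ lam :=
  statement5_general M ρ hρ lam mu hlam hle hmin
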